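/- Let a, b be natural numbers and n = a + b. Let x be a skew-symmetric n×n complex matrix, written in block form x = [[x₁₁, x₁₂],[x₂₁, x₂₂]] with x₁₁ of size a×a and x₂₂ of size b×b, and suppose the block x₂₂ is invertible. Then every skew-symmetric n×n complex matrix C can be written as C = Y·x + x·Yᵀ + D for some n×n complex matrix Y and some skew-symmetric matrix D whose bottom-right b×b block is zero. (This is the transversality of the section U ↦ B|_U to the rank stratification of skew-symmetric matrices, in the case of a skew-symmetric form B.) -/

import Mathlib

open Matrix

/-! The correction `Y` can be taken supported on the bottom-right block, `Y = [[0, 0], [0, Z]]`: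
then the bottom-right block of `Y·x + x·Yᵀ` is `Z·x₂₂ + x₂₂·Zᵀ`, and for the skew-symmetric
invertible `x₂₂` the choice `Z = ½ C₂₂ x₂₂⁻¹` makes this equal to `C₂₂`. The remainder
`D = C - (Y·x + x·Yᵀ)` is then skew-symmetric with vanishing bottom-right block. -/

namespace Matrix

variable {k l m n o p R : Type*}

@[simp]
theorem toBlocks₂₂_transpose (M : Matrix (l ⊕ m) (n ⊕ o) R) : Mᵀ.toBlocks₂₂ = M.toBlocks₂₂ᵀ :=
  rfl

@[simp]
theorem toBlocks₂₂_neg [Neg R] (M : Matrix (l ⊕ m) (n ⊕ o) R) : (-M).toBlocks₂₂ = -M.toBlocks₂₂ :=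
  rfl

@[simp]
theorem toBlocks₂₂_add [Add R] (M N : Matrix (l ⊕ m) (n ⊕ o) R) :
    (M + N).toBlocks₂₂ = M.toBlocks₂₂ + N.toBlocks₂₂ :=
  rfl

@[simp]
theorem toBlocks₂₂_sub [Sub R] (M N : Matrix (l ⊕ m) (n ⊕ o) R) :
    (M - N).toBlocks₂₂ = M.toBlocks₂₂ - N.toBlocks₂₂ :=
  rfl

theorem toBlocks₂₂_transpose_eq_neg [Neg R] {M : Matrix (m ⊕ n) (m ⊕ n) R} (hM : Mᵀ = -M) :
    M.toBlocks₂₂ᵀ = -M.toBlocks₂₂ := by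
  rw [← toBlocks₂₂_transpose, hM, toBlocks₂₂_neg]

section Blocks

variable [Fintype l] [Fintype m] [NonUnitalNonAssocSemiring R]

theorem toBlocks₂₂_fromBlocks_zero_mul (Z : Matrix n m R) (M : Matrix (l ⊕ m) (o ⊕ p) R) :
    (fromBlocks (0 : Matrix k l R) 0 0 Z * M).toBlocks₂₂ = Z * M.toBlocks₂₂ := by
  rw [← fromBlocks_toBlocks M, fromBlocks_multiply, toBlocks_fromBlocks₂₂, toBlocks_fromBlocks₂₂,
    Matrix.zero_mul, zero_add]

theorem toBlocks₂₂_mul_fromBlocks_zero (M : Matrix (o ⊕ p) (l ⊕ m) R) (Z : Matrix m n R) :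
    (M * fromBlocks (0 : Matrix l k R) 0 0 Z).toBlocks₂₂ = M.toBlocks₂₂ * Z := by
  rw [← fromBlocks_toBlocks M, fromBlocks_multiply, toBlocks_fromBlocks₂₂, toBlocks_fromBlocks₂₂,
    Matrix.mul_zero, zero_add]

end Blocks

theorem exists_mul_add_mul_transpose_eq_of_transpose_eq_neg [Fintype n] [DecidableEq n]
    [CommRing R] [Invertible (2 : R)] {A S : Matrix n n R} (hA : Aᵀ = -A) (hAu : IsUnit A)
    (hS : Sᵀ = -S) : ∃ Z : Matrix n n R, Z * A + A * Zᵀ = S := by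
  have hdet : IsUnit A.det := (isUnit_iff_isUnit_det A).mp hAu
  refine ⟨⅟(2 : R) • (S * A⁻¹), ?_⟩
  have hZA : ⅟(2 : R) • (S * A⁻¹) * A = ⅟(2 : R) • S := by
    rw [Matrix.smul_mul, Matrix.mul_assoc, nonsing_inv_mul A hdet, Matrix.mul_one]
  have hneg : (-A)⁻¹ = -A⁻¹ :=
    inv_eq_right_inv (by rw [Matrix.neg_mul, Matrix.mul_neg, neg_neg, mul_nonsing_inv A hdet])
  -- `(S A⁻¹)ᵀ = (Aᵀ)⁻¹ Sᵀ = (-A)⁻¹ (-S) = A⁻¹ S`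
  have hAZ : A * (⅟(2 : R) • (S * A⁻¹))ᵀ = ⅟(2 : R) • S := by
    rw [transpose_smul, transpose_mul, transpose_nonsing_inv, hA, hS, hneg, Matrix.neg_mul,
      Matrix.mul_neg, neg_neg, Matrix.mul_smul, ← Matrix.mul_assoc, mul_nonsing_inv A hdet,
      Matrix.one_mul]
  rw [hZA, hAZ, ← add_smul, invOf_two_add_invOf_two, one_smul]

end Matrix

/-- Let `x` be a skew-symmetric `(a+b)×(a+b)` complex matrix whose
bottom-right `b×b` block is invertible. Then every skew-symmetric matrix `C` can be
written as `C = Y·x + x·Yᵀ + D` with `D` skew-symmetric and having zero bottom-right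
`b×b` block. (Indices are modelled by `Fin a ⊕ Fin b`, so the bottom-right block
is `Matrix.toBlocks₂₂`.) -/
theorem transversality_skew (a b : ℕ)
    (x : Matrix (Fin a ⊕ Fin b) (Fin a ⊕ Fin b) ℂ)
    (hx : xᵀ = -x) (hx22 : IsUnit (Matrix.toBlocks₂₂ x)) :
    ∀ C : Matrix (Fin a ⊕ Fin b) (Fin a ⊕ Fin b) ℂ, Cᵀ = -C →
      ∃ Y D : Matrix (Fin a ⊕ Fin b) (Fin a ⊕ Fin b) ℂ,
        Dᵀ = -D ∧ Matrix.toBlocks₂₂ D = 0 ∧ C = Y * x + x * Yᵀ + D := by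
  intro C hC
  obtain ⟨Z, hZ⟩ := exists_mul_add_mul_transpose_eq_of_transpose_eq_neg
    (toBlocks₂₂_transpose_eq_neg hx) hx22 (toBlocks₂₂_transpose_eq_neg hC)
  set Y := fromBlocks (0 : Matrix (Fin a) (Fin a) ℂ) 0 0 Z with hY
  refine ⟨Y, C - (Y * x + x * Yᵀ), ?_, ?_, by abel⟩
  · rw [transpose_sub, transpose_add, transpose_mul, transpose_mul, transpose_transpose, hx, hC,
      Matrix.mul_neg, Matrix.neg_mul]
    abel
  · rw [toBlocks₂₂_sub, toBlocks₂₂_add, hY, fromBlocks_transpose, transpose_zero, transpose_zero,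
      transpose_zero, toBlocks₂₂_fromBlocks_zero_mul, toBlocks₂₂_mul_fromBlocks_zero, hZ, sub_self]
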